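/- Let m ≥ 1 be the number of outcomes and n ≥ 1 the number of agents, and suppose each of the n agents' preferences is an independently and uniformly chosen linear order on the m outcomes (so all n-tuples of linear orders on the outcome set are equally probable). Then the expected number of Pareto optimal outcomes equals E(K_{m,n}) = - Σ_{i=1}^{m} (-1)^i · C(m, i) / i^{n-1}, where C(m, i) denotes the binomial coefficient. -/

import Mathlib

/-!
By linearity of expectation, the expected number of Pareto optimal outcomes is the sum over the
outcomes `x` of the probability that no other outcome beats `x` for every agent. Inclusion–exclusion
over the set `t` of outcomes that beat `x` unanimously turns this into an alternating sum of the
probabilities that every agent ranks `x` below all of `t`. The agents are independent, and for a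
single uniform ranking each element of `insert x t` is equally likely to be the lowest one, so this
probability is `1 / (#t + 1) ^ n`. Summing over `t` by size and using
`m * C(m - 1, k) = (k + 1) * C(m, k + 1)` gives the formula.
-/

open Finset

theorem card_filter_forall_apply_le_eq_one {α β : Type*} [LinearOrder β] (π : α ≃ β)
    {T : Finset α} (hT : T.Nonempty) : #{a ∈ T | ∀ o ∈ T, π a ≤ π o} = 1 := by
  obtain ⟨a, ha, hmin⟩ := T.exists_min_image π hT
  refine card_eq_one.2 ⟨a, eq_singleton_iff_unique_mem.2 ⟨mem_filter.2 ⟨ha, hmin⟩, ?_⟩⟩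
  intro b hb
  obtain ⟨hbT, hbmin⟩ := mem_filter.1 hb
  exact π.injective ((hbmin a ha).antisymm (hmin b hbT))

section Ranking

variable {α β : Type*} [Fintype α] [DecidableEq α] [Fintype β] [LinearOrder β]

theorem sum_card_filter_forall_apply_le {T : Finset α} (hT : T.Nonempty) :
    ∑ a ∈ T, #{π : α ≃ β | ∀ o ∈ T, π a ≤ π o} = Fintype.card (α ≃ β) := by
  calc ∑ a ∈ T, #{π : α ≃ β | ∀ o ∈ T, π a ≤ π o}
      = ∑ π : α ≃ β, #{a ∈ T | ∀ o ∈ T, π a ≤ π o} :=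
        sum_card_bipartiteAbove_eq_sum_card_bipartiteBelow _
    _ = ∑ _π : α ≃ β, 1 :=
        sum_congr rfl fun π _ => by convert card_filter_forall_apply_le_eq_one π hT
    _ = Fintype.card (α ≃ β) := by simp

theorem card_filter_forall_apply_le_eq_of_mem {T : Finset α} {a b : α} (ha : a ∈ T) (hb : b ∈ T) :
    #{π : α ≃ β | ∀ o ∈ T, π a ≤ π o} = #{π : α ≃ β | ∀ o ∈ T, π b ≤ π o} := by
  have hmem : ∀ o ∈ T, Equiv.swap a b o ∈ T := fun o ho =>
    (Equiv.swap_bijOn_self (s := (T : Set α)) (iff_of_true ha hb)).mapsTo ho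
  refine card_nbij' ((Equiv.swap a b).trans ·) ((Equiv.swap a b).trans ·) ?_ ?_ ?_ ?_
  iterate 2
    intro π hπ
    simp only [coe_filter, mem_univ, true_and] at hπ ⊢
    exact fun o ho => by simpa using hπ _ (hmem o ho)
  all_goals intro π _; ext; simp

theorem card_mul_card_filter_forall_apply_le {T : Finset α} {a : α} (ha : a ∈ T) :
    #T * #{π : α ≃ β | ∀ o ∈ T, π a ≤ π o} = Fintype.card (α ≃ β) := by
  rw [← sum_card_filter_forall_apply_le ⟨a, ha⟩, ← smul_eq_mul, ← sum_const]
  exact sum_congr rfl fun b hb => card_filter_forall_apply_le_eq_of_mem ha hb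

theorem card_add_one_mul_card_filter_forall_apply_lt {S : Finset α} {x : α} (hx : x ∉ S) :
    (#S + 1) * #{π : α ≃ β | ∀ o ∈ S, π x < π o} = Fintype.card (α ≃ β) := by
  rw [← card_insert_of_notMem hx, ← card_mul_card_filter_forall_apply_le (mem_insert_self x S)]
  congr 2
  ext π
  simp only [mem_filter, mem_univ, true_and, forall_mem_insert, le_refl]
  refine forall₂_congr fun o ho => ?_
  have hox : o ≠ x := fun h => hx (h ▸ ho)
  exact ⟨le_of_lt, fun h => h.lt_of_ne (π.injective.ne hox.symm)⟩

end Ranking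

section Profile

variable {ι γ α : Type*} [Fintype ι] [DecidableEq ι] [Fintype γ]

theorem card_filter_forall_apply (P : γ → Prop) [DecidablePred P] :
    #{σ : ι → γ | ∀ i, P (σ i)} = #{c | P c} ^ Fintype.card ι := by
  have : ({σ : ι → γ | ∀ i, P (σ i)} : Finset (ι → γ)) = Fintype.piFinset fun _ => {c | P c} := by
    ext σ; simp
  rw [this, Fintype.card_piFinset, prod_const, card_univ]

theorem card_filter_forall_mem_not_forall [DecidableEq γ] [Fintype α] [DecidableEq α]
    (R : γ → α → Prop) [∀ c o, Decidable (R c o)] (s : Finset α) :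
    (#{σ : ι → γ | ∀ o ∈ s, ¬ ∀ i, R (σ i) o} : ℤ)
      = ∑ t ∈ s.powerset, (-1) ^ #t * ((#{c | ∀ o ∈ t, R c o} ^ Fintype.card ι : ℕ) : ℤ) := by
  have hinf : ∀ t : Finset α, t.inf (fun o => ({σ : ι → γ | ∀ i, R (σ i) o} : Finset _))
      = ({σ : ι → γ | ∀ i, ∀ o ∈ t, R (σ i) o} : Finset _) := fun t => by
    ext σ
    simp only [mem_inf, mem_filter, mem_univ, true_and]
    exact ⟨fun h i o ho => h o ho i, fun h o ho i => h i o ho⟩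
  have hcompl : s.inf (fun o => ({σ : ι → γ | ∀ i, R (σ i) o} : Finset _)ᶜ)
      = ({σ : ι → γ | ∀ o ∈ s, ¬ ∀ i, R (σ i) o} : Finset _) := by
    ext σ; simp [mem_inf]
  rw [← hcompl, inclusion_exclusion_card_inf_compl]
  refine sum_congr rfl fun t _ => ?_
  rw [hinf, card_filter_forall_apply fun c => ∀ o ∈ t, R c o]

end Profile

theorem not_exists_dominates_iff {ι α β : Type*} [Nonempty ι] [PartialOrder β]
    (σ : ι → α ≃ β) (x : α) :
    (¬ ∃ o, (∀ i, σ i x ≤ σ i o) ∧ ∃ j, σ j x < σ j o) ↔ ∀ o ≠ x, ¬ ∀ i, σ i x < σ i o := by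
  refine ⟨fun h o _ hlt => h ⟨o, fun i => (hlt i).le, Classical.arbitrary ι, hlt _⟩, ?_⟩
  rintro h ⟨o, hle, j, hlt⟩
  have hox : o ≠ x := by rintro rfl; exact hlt.false
  exact h o hox fun i => (hle i).lt_of_ne fun e => hox ((σ i).injective e).symm

section Probability

variable {ι α β : Type*} [Fintype ι] [DecidableEq ι] [Fintype α] [DecidableEq α] [Fintype β]
  [LinearOrder β]

theorem sum_card_filter_pareto_eq_sum_card_filter_undominated [Nonempty ι] :
    ∑ σ : ι → α ≃ β, #{x | ¬ ∃ o, (∀ i, σ i x ≤ σ i o) ∧ ∃ j, σ j x < σ j o}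
      = ∑ x : α, #{σ : ι → α ≃ β | ∀ o ≠ x, ¬ ∀ i, σ i x < σ i o} := by
  refine (sum_card_bipartiteAbove_eq_sum_card_bipartiteBelow (s := univ) (t := univ)
    fun (σ : ι → α ≃ β) x => ¬ ∃ o, (∀ i, σ i x ≤ σ i o) ∧ ∃ j, σ j x < σ j o).trans ?_
  exact sum_congr rfl fun x _ =>
    congrArg card <| filter_congr fun σ _ => not_exists_dominates_iff σ x

theorem card_filter_undominated_div [Nonempty (α ≃ β)] (x : α) :
    (#{σ : ι → α ≃ β | ∀ o ≠ x, ¬ ∀ i, σ i x < σ i o} : ℝ) / Fintype.card (α ≃ β) ^ Fintype.card ι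
      = ∑ k ∈ range (Fintype.card α),
          ((Fintype.card α - 1).choose k : ℝ) * (-1) ^ k / (k + 1) ^ Fintype.card ι := by
  have hN : (Fintype.card (α ≃ β) : ℝ) ≠ 0 := Nat.cast_ne_zero.2 Fintype.card_ne_zero
  have hcount : ∀ t ∈ (univ.erase x).powerset,
      (#{π : α ≃ β | ∀ o ∈ t, π x < π o} : ℝ) = Fintype.card (α ≃ β) / (#t + 1) := by
    intro t ht
    have hxt : x ∉ t := fun h => (mem_erase.1 (mem_powerset.1 ht h)).1 rfl
    rw [eq_div_iff (by positivity), mul_comm]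
    exact_mod_cast card_add_one_mul_card_filter_forall_apply_lt hxt
  have hIE : (#{σ : ι → α ≃ β | ∀ o ≠ x, ¬ ∀ i, σ i x < σ i o} : ℝ)
      = ∑ t ∈ (univ.erase x).powerset,
          (-1) ^ #t * (#{π : α ≃ β | ∀ o ∈ t, π x < π o} : ℝ) ^ Fintype.card ι := by
    have hfilter : #{σ : ι → α ≃ β | ∀ o ≠ x, ¬ ∀ i, σ i x < σ i o}
        = #{σ : ι → α ≃ β | ∀ o ∈ univ.erase x, ¬ ∀ i, σ i x < σ i o} :=
      congrArg card <| filter_congr fun σ _ => by simp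
    rw [hfilter]
    exact_mod_cast
      card_filter_forall_mem_not_forall (ι := ι) (fun (π : α ≃ β) o => π x < π o) (univ.erase x)
  rw [hIE, sum_div]
  calc ∑ t ∈ (univ.erase x).powerset,
        (-1) ^ #t * (#{π : α ≃ β | ∀ o ∈ t, π x < π o} : ℝ) ^ Fintype.card ι
          / Fintype.card (α ≃ β) ^ Fintype.card ι
      = ∑ t ∈ (univ.erase x).powerset, (-1 : ℝ) ^ #t / (#t + 1) ^ Fintype.card ι :=
        sum_congr rfl fun t ht => by rw [hcount t ht, div_pow]; field_simp
    _ = ∑ k ∈ range (#(univ.erase x) + 1),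
          (#(univ.erase x)).choose k • ((-1 : ℝ) ^ k / (k + 1) ^ Fintype.card ι) :=
        sum_powerset_apply_card fun k => (-1 : ℝ) ^ k / (k + 1) ^ Fintype.card ι
    _ = _ := by
        rw [card_erase_of_mem (mem_univ x), card_univ,
          Nat.sub_add_cancel (Fintype.card_pos_iff.2 ⟨x⟩)]
        simp only [nsmul_eq_mul, mul_div_assoc]

end Probability

theorem mul_sum_range_choose_pred_div_pow (m : ℕ) {n : ℕ} (hn : 1 ≤ n) :
    m * ∑ k ∈ range m, ((m - 1).choose k : ℝ) * (-1) ^ k / (k + 1) ^ n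
      = - ∑ i ∈ Icc 1 m, (-1 : ℝ) ^ i * (m.choose i : ℝ) / (i : ℝ) ^ (n - 1) := by
  cases m with
  | zero => simp
  | succ m =>
    rw [← Ico_add_one_right_eq_Icc, sum_Ico_eq_sum_range, mul_sum, ← sum_neg_distrib,
      Nat.add_sub_cancel, Nat.add_sub_cancel]
    refine sum_congr rfl fun k _ => ?_
    have hchoose : ((m + 1 : ℕ) : ℝ) * m.choose k = (m + 1).choose (k + 1) * (k + 1) := by
      exact_mod_cast Nat.add_one_mul_choose_eq m k
    obtain ⟨n, rfl⟩ := Nat.exists_eq_add_of_le' hn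
    rw [Nat.add_sub_cancel, pow_succ, add_comm 1 k]
    push_cast at hchoose ⊢
    field_simp
    linear_combination (-1) ^ k * hchoose

theorem expected_card_pareto_uniform_general (m n : ℕ) (hn : 1 ≤ n) :
    (∑ σ : Fin n → (Fin m ≃ Fin m),
        ((Finset.univ.filter fun ostar : Fin m =>
            ¬ ∃ o : Fin m, (∀ i : Fin n, (σ i) ostar ≤ (σ i) o) ∧
              ∃ j : Fin n, (σ j) ostar < (σ j) o).card : ℝ))
      / ((Nat.factorial m : ℝ)) ^ n
    = - ∑ i ∈ Finset.Icc 1 m, (-1 : ℝ) ^ i * (Nat.choose m i : ℝ) / (i : ℝ) ^ (n - 1) := by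
  have : Nonempty (Fin n) := ⟨⟨0, hn⟩⟩
  have hcard : Fintype.card (Fin m ≃ Fin m) = m.factorial := by
    rw [Fintype.card_equiv (Equiv.refl _), Fintype.card_fin]
  have hx : ∀ x : Fin m,
      (#{σ : Fin n → (Fin m ≃ Fin m) | ∀ o ≠ x, ¬ ∀ i, σ i x < σ i o} : ℝ) / (m.factorial : ℝ) ^ n
        = ∑ k ∈ range m, ((m - 1).choose k : ℝ) * (-1) ^ k / (k + 1) ^ n := fun x => by
    simpa [hcard] using card_filter_undominated_div (ι := Fin n) (β := Fin m) x
  have hpareto : ∑ σ : Fin n → (Fin m ≃ Fin m),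
        (Finset.univ.filter fun ostar : Fin m =>
            ¬ ∃ o : Fin m, (∀ i : Fin n, (σ i) ostar ≤ (σ i) o) ∧
              ∃ j : Fin n, (σ j) ostar < (σ j) o).card
      = ∑ x : Fin m, #{σ : Fin n → (Fin m ≃ Fin m) | ∀ o ≠ x, ¬ ∀ i, σ i x < σ i o} := by
    -- `convert` only has to identify the `Fin`-specific `Decidable` instances of the statement
    convert sum_card_filter_pareto_eq_sum_card_filter_undominated (ι := Fin n) (α := Fin m)
  rw [← Nat.cast_sum, hpareto, Nat.cast_sum, sum_div, sum_congr rfl fun x _ => hx x, sum_const,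
    card_univ, Fintype.card_fin, nsmul_eq_mul]
  exact mul_sum_range_choose_pred_div_pow m hn

/-- O'Neill's formula: with `m ≥ 1` outcomes and `n ≥ 1` agents whose
preferences are independently and uniformly chosen linear orders on the outcomes
(each agent's linear order is encoded by a ranking bijection `σ i : Fin m ≃ Fin m`,
agent `i` weakly preferring `a` to `b` iff `σ i b ≤ σ i a`, so that all `(m!)^n`
profiles are equally probable), the expected number of Pareto optimal outcomes is
`E(K_{m,n}) = - ∑_{i=1}^{m} (-1)^i · C(m,i) / i^(n-1)`. -/
theorem expected_card_pareto_uniform (m n : ℕ) (hm : 1 ≤ m) (hn : 1 ≤ n) :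
    (∑ σ : Fin n → (Fin m ≃ Fin m),
        ((Finset.univ.filter fun ostar : Fin m =>
            ¬ ∃ o : Fin m, (∀ i : Fin n, (σ i) ostar ≤ (σ i) o) ∧
              ∃ j : Fin n, (σ j) ostar < (σ j) o).card : ℝ))
      / ((Nat.factorial m : ℝ)) ^ n
    = - ∑ i ∈ Finset.Icc 1 m, (-1 : ℝ) ^ i * (Nat.choose m i : ℝ) / (i : ℝ) ^ (n - 1) :=
  expected_card_pareto_uniform_general m n hn
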